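/- arXiv:math/0511598 — 2 statements merged into one kernel-verified Lean document; each statement's English description precedes it below -/
import Mathlib

section
/- Let Γ be a connected graph and e an edge of Γ that is not a bridge (i.e., Γ − e is connected). Then exactly one of the following three cases holds: (1) Γ, Γ−e, and Γ/e are all non-bipartite; (2) Γ and Γ−e are bipartite and Γ/e is non-bipartite; (3) Γ−e and Γ/e are bipartite and Γ is non-bipartite. -/
/-- The contraction `Γ/e` of the edge `e = {u,v}`: the vertex `v` is merged into `u`,
    so the vertices are those of `Γ` other than `v`. -/
def contractEdge {V : Type*} (G : SimpleGraph V) (u v : V) :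
    SimpleGraph {w : V // w ≠ v} :=
  SimpleGraph.fromRel
    (fun a b => G.Adj a.1 b.1 ∨ (a.1 = u ∧ G.Adj v b.1) ∨ (b.1 = u ∧ G.Adj a.1 v))

private lemma zmod2_ne_iff (x y : ZMod 2) : x ≠ y ↔ x + y = 1 := by revert x y; decide

private lemma colorable2_iff {V : Type*} (H : SimpleGraph V) :
    H.Colorable 2 ↔ ∃ f : V → ZMod 2, ∀ ⦃a b : V⦄, H.Adj a b → f a + f b = 1 := by
  constructor
  · rintro ⟨C⟩
    refine ⟨fun w => ((C w : ℕ) : ZMod 2), fun a b hab => ?_⟩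
    rw [← zmod2_ne_iff]
    intro h
    apply C.valid hab
    have h2 := congrArg ZMod.val h
    rw [ZMod.val_cast_of_lt (C a).isLt, ZMod.val_cast_of_lt (C b).isLt] at h2
    exact Fin.ext h2
  · rintro ⟨f, hf⟩
    have C : H.Coloring (ZMod 2) :=
      SimpleGraph.Coloring.mk f (fun hab => (zmod2_ne_iff _ _).2 (hf hab))
    have := C.colorable
    rwa [ZMod.card] at this

private lemma parity2 {V : Type*} {H : SimpleGraph V} {f g : V → ZMod 2}
    (hf : ∀ ⦃a b : V⦄, H.Adj a b → f a + f b = 1)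
    (hg : ∀ ⦃a b : V⦄, H.Adj a b → g a + g b = 1)
    {a b : V} (p : H.Walk a b) : f a + g a = f b + g b := by
  induction p with
  | nil => rfl
  | cons h q ih =>
    have key : ∀ x y x' y' xb yb : ZMod 2,
        x + x' = 1 → y + y' = 1 → x' + y' = xb + yb → x + y = xb + yb := by decide
    exact key _ _ _ _ _ _ (hf h) (hg h) ih

/-- Bipartiteness trichotomy for `Γ`, `Γ−e`, `Γ/e` when `e` is not a bridge. -/
theorem stmt_1 {V : Type*} [Fintype V] (G : SimpleGraph V) (u v : V)
    (he : G.Adj u v) (hconn : G.Connected)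
    (hdel : (G.deleteEdges {s(u, v)}).Connected) :
    (¬ G.Colorable 2 ∧ ¬ (G.deleteEdges {s(u, v)}).Colorable 2 ∧
        ¬ (contractEdge G u v).Colorable 2) ∨
    (G.Colorable 2 ∧ (G.deleteEdges {s(u, v)}).Colorable 2 ∧
        ¬ (contractEdge G u v).Colorable 2) ∨
    (¬ G.Colorable 2 ∧ (G.deleteEdges {s(u, v)}).Colorable 2 ∧
        (contractEdge G u v).Colorable 2) := by
  classical
  have hne : u ≠ v := he.ne
  set H := G.deleteEdges {s(u, v)} with hHdef
  have hHadj : ∀ a b : V, H.Adj a b ↔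
      G.Adj a b ∧ ¬(a = u ∧ b = v) ∧ ¬(a = v ∧ b = u) := by
    intro a b
    rw [hHdef, SimpleGraph.deleteEdges_adj, Set.mem_singleton_iff, Sym2.eq_iff]
    tauto
  -- from a 2-coloring of the contraction, get a 2-coloring of `H` with `u,v` same color
  have key : ∀ f' : {w : V // w ≠ v} → ZMod 2,
      (∀ ⦃a b⦄, (contractEdge G u v).Adj a b → f' a + f' b = 1) →
      ∃ g : V → ZMod 2, (∀ ⦃a b : V⦄, H.Adj a b → g a + g b = 1) ∧ g u = g v := by
    intro f' hf'
    refine ⟨fun w => if h : w = v then f' ⟨u, hne⟩ else f' ⟨w, h⟩, ?_, by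
      simp [hne]⟩
    intro a b hab
    rw [hHadj] at hab
    obtain ⟨hG, h1, h2⟩ := hab
    by_cases ha : a = v
    · have hbv : b ≠ v := fun h => hG.ne (ha.trans h.symm)
      have hbu : b ≠ u := fun h => h2 ⟨ha, h⟩
      have hGvb : G.Adj v b := ha ▸ hG
      have hadj : (contractEdge G u v).Adj ⟨u, hne⟩ ⟨b, hbv⟩ := by
        refine ⟨fun h => hbu (congrArg Subtype.val h).symm, ?_⟩
        exact Or.inl (Or.inr (Or.inl ⟨rfl, hGvb⟩))
      simpa [ha, hbv] using hf' hadj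
    · by_cases hb : b = v
      · have hau : a ≠ u := fun h => h1 ⟨h, hb⟩
        have hGav : G.Adj a v := hb ▸ hG
        have hadj : (contractEdge G u v).Adj ⟨a, ha⟩ ⟨u, hne⟩ := by
          refine ⟨fun h => hau (congrArg Subtype.val h), ?_⟩
          exact Or.inl (Or.inr (Or.inr ⟨rfl, hGav⟩))
        simpa [ha, hb] using hf' hadj
      · have hadj : (contractEdge G u v).Adj ⟨a, ha⟩ ⟨b, hb⟩ := by
          refine ⟨fun h => hG.ne (congrArg Subtype.val h), Or.inl (Or.inl hG)⟩
        simpa [ha, hb] using hf' hadj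
  by_cases hHc : H.Colorable 2
  · -- `H` is bipartite
    obtain ⟨f, hf⟩ := (colorable2_iff H).1 hHc
    obtain ⟨p⟩ := hdel.preconnected u v
    by_cases hsame : f u = f v
    · -- case (3)
      refine Or.inr (Or.inr ⟨?_, hHc, ?_⟩)
      · rintro hGc
        obtain ⟨g, hg⟩ := (colorable2_iff G).1 hGc
        have hgH : ∀ ⦃a b : V⦄, H.Adj a b → g a + g b = 1 := fun a b hab =>
          hg ((hHadj a b).1 hab).1
        have hpar := parity2 hf hgH p
        have hguv : g u = g v := by linear_combination hpar - hsame
        exact ((zmod2_ne_iff _ _).2 (hg he)) hguv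
      · refine (colorable2_iff _).2 ⟨fun x => f x.1, ?_⟩
        intro a b hab
        obtain ⟨hab_ne, hrel⟩ := hab
        have hflip : ∀ x y : {w : V // w ≠ v}, x ≠ y →
            (G.Adj x.1 y.1 ∨ (x.1 = u ∧ G.Adj v y.1) ∨ (y.1 = u ∧ G.Adj x.1 v)) →
            f x.1 + f y.1 = 1 := by
          rintro x y hxy (hxy' | ⟨hxu, hvy⟩ | ⟨hyu, hxv⟩)
          · exact hf ((hHadj _ _).2 ⟨hxy', fun h => y.2 h.2, fun h => x.2 h.1⟩)
          · have hyu : y.1 ≠ u := fun h =>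
              hxy (Subtype.ext (hxu.trans h.symm))
            have := hf ((hHadj _ _).2 ⟨hvy, fun h => hne h.1.symm, fun h => hyu h.2⟩)
            rw [hxu]
            linear_combination this + hsame
          · have hxu : x.1 ≠ u := fun h =>
              hxy (Subtype.ext (h.trans hyu.symm))
            have := hf ((hHadj _ _).2 ⟨hxv, fun h => hxu h.1, fun h => x.2 h.1⟩)
            rw [hyu]
            linear_combination this + hsame
        rcases hrel with h | h
        · exact hflip a b hab_ne h
        · have := hflip b a hab_ne.symm h
          linear_combination this
    · -- case (2)
      have hsum : f u + f v = 1 := (zmod2_ne_iff _ _).1 hsame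
      refine Or.inr (Or.inl ⟨?_, hHc, ?_⟩)
      · refine (colorable2_iff G).2 ⟨f, ?_⟩
        intro a b hab
        by_cases h1 : a = u ∧ b = v
        · rw [h1.1, h1.2]; exact hsum
        · by_cases h2 : a = v ∧ b = u
          · rw [h2.1, h2.2]; linear_combination hsum
          · exact hf ((hHadj a b).2 ⟨hab, h1, h2⟩)
      · rintro hCc
        obtain ⟨f', hf'⟩ := (colorable2_iff _).1 hCc
        obtain ⟨g, hg, hguv⟩ := key f' hf'
        have hpar := parity2 hf hg p
        exact hsame (by linear_combination hpar - hguv)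
  · -- case (1)
    refine Or.inl ⟨?_, hHc, ?_⟩
    · intro hGc
      obtain ⟨g, hg⟩ := (colorable2_iff G).1 hGc
      exact hHc ((colorable2_iff H).2 ⟨g, fun a b hab => hg ((hHadj a b).1 hab).1⟩)
    · intro hCc
      obtain ⟨f', hf'⟩ := (colorable2_iff _).1 hCc
      obtain ⟨g, hg, _⟩ := key f' hf'
      exact hHc ((colorable2_iff H).2 ⟨g, hg⟩)
end

section
/- Let Γ be a connected graph and e an edge that is not a bridge. If at least one of Γ or Γ−e is non-bipartite (cases 1 and 2 of the bipartiteness trichotomy), then the chromatic-polynomial deletion-contraction identity P_Γ(λ) = P_{Γ−e}(λ) − P_{Γ/e}(λ) holds, and correspondingly the Poincaré polynomials satisfy R_Γ(t,q) = R_{Γ−e}(t,q) + t·R_{Γ/e}(t,q) when Γ/e is not bipartite, where R is defined from the chromatic polynomial via the formula R_Γ(t,q) = (−1)^{n−1} t^n (t+q²)/(t²−q²) · P_Γ((t−q)/t) plus the correction term q^n(t+1)/(t+q) if Γ is bipartite. -/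
/-- The number of proper colorings of `G` with `k` colors
    (the chromatic polynomial evaluated at `k`). -/
noncomputable def colCount {V : Type*} [Fintype V] (G : SimpleGraph V) (k : ℕ) : ℕ :=
  Nat.card {f : V → Fin k // ∀ a b, G.Adj a b → f a ≠ f b}

open Classical in
/-- The Poincaré polynomial of a connected graph with `m` vertices, chromatic polynomial
    `P` and bipartiteness `bip`, expressed through the chromatic polynomial:
    `R(t,q) = (−1)^{m−1} tᵐ (t+q²)/(t²−q²) · P((t−q)/t) (+ qᵐ(t+1)/(t+q) if bipartite)`. -/
noncomputable def Rpoly (P : Polynomial ℚ) (m : ℕ) (bip : Prop) (t q : ℚ) : ℚ :=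
  (-1 : ℚ) ^ (m - 1) * t ^ m * (t + q ^ 2) / (t ^ 2 - q ^ 2) * P.eval ((t - q) / t) +
    (if bip then q ^ m * (t + 1) / (t + q) else 0)

section aux
variable {V : Type*} {α : Type*} (G : SimpleGraph V) {u v : V}

lemma aux_del_to_G' (huv : u ≠ v) (f : V → α)
    (hf : ∀ a b, (G.deleteEdges {s(u, v)}).Adj a b → f a ≠ f b)
    (hne : f u ≠ f v) : ∀ a b, G.Adj a b → f a ≠ f b := by
  intro a b hab
  by_cases h : s(a, b) = s(u, v)
  · rw [Sym2.eq_iff] at h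
    rcases h with ⟨rfl, rfl⟩ | ⟨rfl, rfl⟩
    · exact hne
    · exact hne.symm
  · exact hf a b (by rw [SimpleGraph.deleteEdges_adj]; exact ⟨hab, by simpa using h⟩)

lemma aux_del_to_contract' (huv : u ≠ v) (f : V → α)
    (hf : ∀ a b, (G.deleteEdges {s(u, v)}).Adj a b → f a ≠ f b)
    (heq : f u = f v) :
    ∀ a b : {w : V // w ≠ v}, (contractEdge G u v).Adj a b → f a.1 ≠ f b.1 := by
  have key : ∀ a b : {w : V // w ≠ v}, a ≠ b →
      (G.Adj a.1 b.1 ∨ (a.1 = u ∧ G.Adj v b.1) ∨ (b.1 = u ∧ G.Adj a.1 v)) →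
      f a.1 ≠ f b.1 := by
    rintro a b hne (hG | ⟨hau, hvb⟩ | ⟨hbu, hav⟩)
    · refine hf a.1 b.1 ?_
      rw [SimpleGraph.deleteEdges_adj]
      refine ⟨hG, ?_⟩
      simp only [Set.mem_singleton_iff, Sym2.eq_iff]
      rintro (⟨h1, h2⟩ | ⟨h1, h2⟩)
      · exact b.2 h2
      · exact a.2 h1
    · have hbne : b.1 ≠ u := fun hb => hne (Subtype.ext (hau.trans hb.symm))
      have hfvb : f v ≠ f b.1 := by
        refine hf v b.1 ?_
        rw [SimpleGraph.deleteEdges_adj]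
        refine ⟨hvb, ?_⟩
        simp only [Set.mem_singleton_iff, Sym2.eq_iff]
        rintro (⟨h1, h2⟩ | ⟨h1, h2⟩)
        · exact huv h1.symm
        · exact hbne h2
      rw [hau, heq]; exact hfvb
    · have hane : a.1 ≠ u := fun ha => hne (Subtype.ext (ha.trans hbu.symm))
      have hfav : f a.1 ≠ f v := by
        refine hf a.1 v ?_
        rw [SimpleGraph.deleteEdges_adj]
        refine ⟨hav, ?_⟩
        simp only [Set.mem_singleton_iff, Sym2.eq_iff]
        rintro (⟨h1, h2⟩ | ⟨h1, h2⟩)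
        · exact hane h1
        · exact a.2 h1
      rw [hbu, heq]; exact hfav
  intro a b hab
  rw [contractEdge, SimpleGraph.fromRel_adj] at hab
  obtain ⟨hne, h | h⟩ := hab
  · exact key a b hne h
  · exact (key b a hne.symm h).symm

lemma aux_G_to_del' (f : V → α) (hf : ∀ a b, G.Adj a b → f a ≠ f b) :
    ∀ a b, (G.deleteEdges {s(u, v)}).Adj a b → f a ≠ f b :=
  fun a b hab => hf a b (SimpleGraph.deleteEdges_adj.mp hab).1

lemma aux_contract_to_del' [DecidableEq V] (he : G.Adj u v) (g : {w : V // w ≠ v} → α)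
    (hg : ∀ a b, (contractEdge G u v).Adj a b → g a ≠ g b) :
    ∀ a b, (G.deleteEdges {s(u, v)}).Adj a b →
      (fun w => if h : w = v then g ⟨u, he.ne⟩ else g ⟨w, h⟩) a ≠
      (fun w => if h : w = v then g ⟨u, he.ne⟩ else g ⟨w, h⟩) b := by
  intro a b hab
  rw [SimpleGraph.deleteEdges_adj] at hab
  obtain ⟨hG, hs⟩ := hab
  simp only [Set.mem_singleton_iff, Sym2.eq_iff] at hs
  push_neg at hs
  obtain ⟨hs1, hs2⟩ := hs
  have hne : a ≠ b := hG.ne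
  by_cases ha : a = v
  · have hbv : b ≠ v := fun h => hne (ha.trans h.symm)
    have hbu : b ≠ u := hs2 ha
    simp only [dif_pos ha, dif_neg hbv]
    refine hg ⟨u, he.ne⟩ ⟨b, hbv⟩ ?_
    rw [contractEdge, SimpleGraph.fromRel_adj]
    exact ⟨fun h => hbu (congrArg Subtype.val h).symm, Or.inl (Or.inr (Or.inl ⟨rfl, ha ▸ hG⟩))⟩
  · by_cases hb : b = v
    · have hau : a ≠ u := fun h => hs1 h hb
      simp only [dif_pos hb, dif_neg ha]
      refine (hg ⟨u, he.ne⟩ ⟨a, ha⟩ ?_).symm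
      rw [contractEdge, SimpleGraph.fromRel_adj]
      exact ⟨fun h => hau (congrArg Subtype.val h).symm, Or.inl (Or.inr (Or.inl ⟨rfl, (hb ▸ hG).symm⟩))⟩
    · simp only [dif_neg ha, dif_neg hb]
      refine hg ⟨a, ha⟩ ⟨b, hb⟩ ?_
      rw [contractEdge, SimpleGraph.fromRel_adj]
      exact ⟨fun h => hne (congrArg Subtype.val h), Or.inl (Or.inl hG)⟩



lemma count_del {V : Type*} [Fintype V] [DecidableEq V] (G : SimpleGraph V) {u v : V}
    (he : G.Adj u v) (k : ℕ) :
    colCount (G.deleteEdges {s(u, v)}) k = colCount G k + colCount (contractEdge G u v) k := by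
  classical
  set B := {f : V → Fin k // ∀ a b, (G.deleteEdges {s(u, v)}).Adj a b → f a ≠ f b} with hB
  have e1 : {f : B // f.1 u ≠ f.1 v} ≃
      {f : V → Fin k // ∀ a b, G.Adj a b → f a ≠ f b} :=
    { toFun := fun f => ⟨f.1.1, aux_del_to_G' G he.ne f.1.1 f.1.2 f.2⟩
      invFun := fun f => ⟨⟨f.1, aux_G_to_del' G f.1 f.2⟩, f.2 u v he⟩
      left_inv := fun f => rfl
      right_inv := fun f => rfl }
  have e2 : {f : B // f.1 u = f.1 v} ≃
      {f : {w : V // w ≠ v} → Fin k // ∀ a b, (contractEdge G u v).Adj a b → f a ≠ f b} :=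
    { toFun := fun f => ⟨fun w => f.1.1 w.1, aux_del_to_contract' G he.ne f.1.1 f.1.2 f.2⟩
      invFun := fun g => ⟨⟨fun w => if h : w = v then g.1 ⟨u, he.ne⟩ else g.1 ⟨w, h⟩,
        aux_contract_to_del' G he g.1 g.2⟩, by simp [he.ne]⟩
      left_inv := fun f => Subtype.ext (Subtype.ext (funext fun w => by
        by_cases hw : w = v
        · subst hw; simpa using f.2
        · simp [hw]))
      right_inv := fun g => Subtype.ext (funext fun w => by simp [w.2]) }
  have hcard := Nat.card_congr (Equiv.sumCompl (fun f : B => f.1 u = f.1 v))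
  rw [Nat.card_sum, Nat.card_congr e1, Nat.card_congr e2] at hcard
  show Nat.card B = _
  rw [← hcard, colCount, colCount, Nat.add_comm]

lemma no2col_del {V : Type*} (G : SimpleGraph V) {u v : V} (he : G.Adj u v)
    (hcase : ¬ G.Colorable 2 ∨ ¬ (G.deleteEdges {s(u, v)}).Colorable 2)
    (hc : ¬ (contractEdge G u v).Colorable 2) :
    ¬ (G.deleteEdges {s(u, v)}).Colorable 2 := by
  rcases hcase with hG | h
  · rintro ⟨C⟩
    by_cases h : C u = C v
    · exact hc ⟨SimpleGraph.Coloring.mk (fun w => C w.1)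
        (fun {a b} hab => aux_del_to_contract' G he.ne C
          (fun a b hab => C.valid hab) h a b hab)⟩
    · exact hG ⟨SimpleGraph.Coloring.mk C
        (fun {a b} hab => aux_del_to_G' G he.ne C (fun a b hab => C.valid hab) h a b hab)⟩
  · exact h

end aux

/-- Deletion–contraction for the chromatic polynomial, and the corresponding
    deletion–contraction formula for the Poincaré polynomial when `Γ/e` is not
    bipartite. -/
theorem stmt_13 {V : Type*} [Fintype V] [DecidableEq V] (G : SimpleGraph V) (u v : V)
    (he : G.Adj u v) (hconn : G.Connected)
    (hdel : (G.deleteEdges {s(u, v)}).Connected)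
    (hcase : ¬ G.Colorable 2 ∨ ¬ (G.deleteEdges {s(u, v)}).Colorable 2)
    (n : ℕ) (hn : Fintype.card V = n)
    (P Pd Pc : Polynomial ℚ)
    (hP : ∀ k : ℕ, P.eval (k : ℚ) = colCount G k)
    (hPd : ∀ k : ℕ, Pd.eval (k : ℚ) = colCount (G.deleteEdges {s(u, v)}) k)
    (hPc : ∀ k : ℕ, Pc.eval (k : ℚ) = colCount (contractEdge G u v) k) :
    P = Pd - Pc ∧
      (¬ (contractEdge G u v).Colorable 2 →
        ∀ t q : ℚ, t ≠ 0 → t ^ 2 ≠ q ^ 2 →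
          Rpoly P n (G.Colorable 2) t q =
            Rpoly Pd n ((G.deleteEdges {s(u, v)}).Colorable 2) t q +
              t * Rpoly Pc (n - 1) ((contractEdge G u v).Colorable 2) t q) := by
  have hpoly : P = Pd - Pc := by
    have hz : Pd - Pc - P = 0 := by
      apply Polynomial.eq_zero_of_infinite_isRoot
      apply Set.infinite_of_injective_forall_mem
        (f := (Nat.cast : ℕ → ℚ)) Nat.cast_injective
      intro k
      simp only [Set.mem_setOf_eq, Polynomial.IsRoot, Polynomial.eval_sub, hP, hPd, hPc,
        count_del G he k]
      push_cast
      ring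
    linear_combination -hz
  refine ⟨hpoly, fun hc t q ht htq => ?_⟩
  have hGd : ¬ (G.deleteEdges {s(u, v)}).Colorable 2 := no2col_del G he hcase hc
  have hG : ¬ G.Colorable 2 := fun h => hGd (h.mono_left (SimpleGraph.deleteEdges_le _))
  have hn2 : 2 ≤ n := by
    rw [← hn]
    exact Fintype.one_lt_card_iff_nontrivial.mpr ⟨⟨u, v, he.ne⟩⟩
  obtain ⟨m, rfl⟩ : ∃ m, n = m + 2 := ⟨n - 2, by omega⟩
  have hden : t ^ 2 - q ^ 2 ≠ 0 := sub_ne_zero.mpr htq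
  simp only [Rpoly, if_neg hG, if_neg hGd, if_neg hc, add_zero, hpoly, Polynomial.eval_sub]
  have h1 : m + 2 - 1 = m + 1 := rfl
  have h2 : m + 1 - 1 = m := rfl
  rw [h1, h2]
  field_simp
  ring
end
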